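/- Let X ⊆ E be nonempty and compact, let μ, β, γ > 0, and set κ := 1/(βγ + 1) and θ := μ/(γκ + μ). Then for every x ∈ E, a point y ∈ E minimizes the function w ↦ ι̂_μ(w) + (1/(2γ))‖w − x‖² over E if and only if y = θ·κ·x + (1 − θ)·p for some p ∈ X with ‖κx − p‖ = infDist(κx, X); that is, the set of minimizers equals {θκx + (1 − θ)p : p ∈ X, ‖κx − p‖ = infDist(κx, X)}. -/

import Mathlib

/-! Since `infDist w X ^ 2 = min_{q ∈ X} ‖w - q‖ ^ 2` (attained, `X` being compact), the objective
is the partial minimum over `q ∈ X` of a function jointly quadratic in `(w, q)`. Completing the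
square in `w` writes that function as `A ‖w - (θκ x + (1 - θ) q)‖² + ‖κ x - q‖² / (2(γκ + μ))` plus a
constant, so `w` is a minimizer iff `w = θκ x + (1 - θ) q` for some `q ∈ X` minimizing `‖κ x - q‖`. -/

open Metric Set

theorem isMinOn_univ_iff_of_eq_min_sq_norm_add {ι E : Type*} [NormedAddCommGroup E]
    {F : E → ℝ} {X : Set ι} {Y : ι → E} {h : ι → ℝ} {A : ℝ} (hA : 0 < A)
    (hF_le : ∀ w, ∀ q ∈ X, F w ≤ A * ‖w - Y q‖ ^ 2 + h q)
    (hF_eq : ∀ w, ∃ q ∈ X, F w = A * ‖w - Y q‖ ^ 2 + h q) {y : E} :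
    IsMinOn F univ y ↔ ∃ p ∈ X, IsMinOn h X p ∧ y = Y p := by
  have hF_le_at : ∀ q ∈ X, F (Y q) ≤ h q := fun q hq => by simpa using hF_le (Y q) q hq
  constructor
  · intro hy
    obtain ⟨p, hp, hFy⟩ := hF_eq y
    have hle : ∀ q ∈ X, A * ‖y - Y p‖ ^ 2 + h p ≤ h q := fun q hq =>
      hFy ▸ (hy (mem_univ (Y q))).trans (hF_le_at q hq)
    have hA_sq : 0 ≤ A * ‖y - Y p‖ ^ 2 := by positivity
    have hyp : ‖y - Y p‖ ^ 2 = 0 :=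
      (nonpos_of_mul_nonpos_right (by linarith [hle p hp]) hA).antisymm (sq_nonneg _)
    refine ⟨p, hp, isMinOn_iff.2 fun q hq => by linarith [hle q hq], ?_⟩
    exact norm_sub_eq_zero_iff.mp (pow_eq_zero_iff two_ne_zero |>.mp hyp)
  · rintro ⟨p, hp, hmin, rfl⟩ w -
    obtain ⟨q, hq, hFw⟩ := hF_eq w
    calc F (Y p) ≤ h p := hF_le_at p hp
      _ ≤ h q := hmin hq
      _ ≤ F w := hFw ▸ le_add_of_nonneg_left (by positivity)

theorem isMinOn_mul_norm_sub_sq_add_iff {E : Type*} [NormedAddCommGroup E] {X : Set E}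
    {z p : E} {c : ℝ} (d : ℝ) (hc : 0 < c) (hp : p ∈ X) :
    IsMinOn (fun q => c * ‖z - q‖ ^ 2 + d) X p ↔ ‖z - p‖ = infDist z X := by
  have hmono : ∀ q, c * ‖z - p‖ ^ 2 + d ≤ c * ‖z - q‖ ^ 2 + d ↔ dist z p ≤ dist z q := fun q => by
    rw [add_le_add_iff_right, mul_le_mul_iff_right₀ hc, dist_eq_norm, dist_eq_norm,
      pow_le_pow_iff_left₀ (norm_nonneg _) (norm_nonneg _) two_ne_zero]
  simp only [isMinOn_iff, hmono]
  rw [← dist_eq_norm, ← le_infDist ⟨p, hp⟩]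
  exact ⟨fun h => h.antisymm (infDist_le_dist_of_mem hp), le_of_eq⟩

theorem prox_objective_eq_completed_square {E : Type*} [NormedAddCommGroup E] [InnerProductSpace ℝ E]
    {μ β γ κ θ : ℝ} (hμ : 0 < μ) (hβ : 0 ≤ β) (hγ : 0 < γ)
    (hκ : κ = 1 / (β * γ + 1)) (hθ : θ = μ / (γ * κ + μ)) (x w q : E) :
    ‖w - q‖ ^ 2 / (2 * μ) + β / 2 * ‖w‖ ^ 2 + 1 / (2 * γ) * ‖w - x‖ ^ 2
      = (γ * κ + μ) / (2 * μ * γ * κ) * ‖w - ((θ * κ) • x + (1 - θ) • q)‖ ^ 2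
        + (1 / (2 * (γ * κ + μ)) * ‖κ • x - q‖ ^ 2 + β * κ / 2 * ‖x‖ ^ 2) := by
  have hκpos : 0 < κ := hκ ▸ by positivity
  have hβ_eq : β = (1 - κ) / (κ * γ) := by rw [hκ]; field_simp; ring
  subst hθ hβ_eq
  simp only [← real_inner_self_eq_norm_sq, inner_sub_left, inner_sub_right, inner_add_left,
    inner_add_right, real_inner_smul_left, real_inner_smul_right, real_inner_comm q w,
    real_inner_comm x w, real_inner_comm q x]
  field_simp
  ring

theorem nexos_prox_of_penalty
    {E : Type*} [NormedAddCommGroup E] [InnerProductSpace ℝ E]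
    (X : Set E) (hXne : X.Nonempty) (hXcp : IsCompact X)
    (μ β γ : ℝ) (hμ : 0 < μ) (hβ : 0 < β) (hγ : 0 < γ) :
    ∀ x y : E,
      IsMinOn (fun w => (Metric.infDist w X) ^ 2 / (2 * μ) + β / 2 * ‖w‖ ^ 2
          + 1 / (2 * γ) * ‖w - x‖ ^ 2) Set.univ y ↔
      ∃ p ∈ X, ‖(1 / (β * γ + 1)) • x - p‖ = Metric.infDist ((1 / (β * γ + 1)) • x) X ∧
        y = ((μ / (γ * (1 / (β * γ + 1)) + μ)) * (1 / (β * γ + 1))) • x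
          + (1 - μ / (γ * (1 / (β * γ + 1)) + μ)) • p := by
  intro x y
  set κ := 1 / (β * γ + 1) with hκ
  set θ := μ / (γ * κ + μ) with hθ
  have hκpos : 0 < κ := by positivity
  have key := prox_objective_eq_completed_square (x := x) hμ hβ.le hγ hκ hθ
  rw [isMinOn_univ_iff_of_eq_min_sq_norm_add (A := (γ * κ + μ) / (2 * μ * γ * κ))
    (Y := fun q => (θ * κ) • x + (1 - θ) • q)
    (h := fun q => 1 / (2 * (γ * κ + μ)) * ‖κ • x - q‖ ^ 2 + β * κ / 2 * ‖x‖ ^ 2) (by positivity)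
    (fun w q hq => by
      have hdist : infDist w X ≤ ‖w - q‖ := dist_eq_norm w q ▸ infDist_le_dist_of_mem hq
      rw [← key]
      gcongr
      exact infDist_nonneg)
    (fun w => by
      obtain ⟨q, hq, hdist⟩ := hXcp.exists_infDist_eq_dist hXne w
      exact ⟨q, hq, by rw [← key, hdist, dist_eq_norm]⟩)]
  refine exists_congr fun p => and_congr_right fun hp => ?_
  rw [isMinOn_mul_norm_sub_sq_add_iff _ (by positivity) hp]
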